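/- arXiv:1707.04689 — 7 statements merged into one kernel-verified Lean document; each statement's English description precedes it below -/
import Mathlib

section
/- For real numbers x, y, z_1, ..., z_n with x > 0 and xy - Σ z_i² > 0, the function (x, y, z) ↦ log(xy - Σ z_i²) is concave on this domain. -/
open Real

lemma log_concave_combo (a b s : ℝ) (ha : 0 < a) (hb : 0 < b)
    (hs0 : 0 ≤ s) (hs1 : s ≤ 1) :
    s * Real.log a + (1 - s) * Real.log b ≤ Real.log (s * a + (1 - s) * b) := by
  have := strictConcaveOn_log_Ioi.concaveOn.2 (Set.mem_Ioi.2 ha) (Set.mem_Ioi.2 hb)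
    hs0 (by linarith : (0:ℝ) ≤ 1 - s) (by ring)
  simpa [smul_eq_mul] using this

open Real in
/-- concavity of `(x, y, z) ↦ log (x*y - ∑ zᵢ²)` on the domain
`{x > 0, x*y - ∑ zᵢ² > 0}`. -/
theorem log_quadratic_concave (n : ℕ) (x y x' y' : ℝ) (z z' : Fin n → ℝ)
    (hx : 0 < x) (h : 0 < x * y - ∑ i, (z i) ^ 2)
    (hx' : 0 < x') (h' : 0 < x' * y' - ∑ i, (z' i) ^ 2)
    (s : ℝ) (hs0 : 0 ≤ s) (hs1 : s ≤ 1) :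
    Real.log ((s * x + (1 - s) * x') * (s * y + (1 - s) * y')
        - ∑ i, (s * z i + (1 - s) * z' i) ^ 2)
      ≥ s * Real.log (x * y - ∑ i, (z i) ^ 2)
        + (1 - s) * Real.log (x' * y' - ∑ i, (z' i) ^ 2) := by
  have hs1' : (0:ℝ) ≤ 1 - s := by linarith
  set S : ℝ := ∑ i, (z i) ^ 2 with hS
  set S' : ℝ := ∑ i, (z' i) ^ 2 with hS'
  set xs : ℝ := s * x + (1 - s) * x' with hxs
  have hxsp : 0 < xs := by
    rcases eq_or_lt_of_le hs0 with hs | hs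
    · simp [hxs, ← hs]; linarith
    · positivity
  set u : ℝ := (x * y - S) / x with hu
  set u' : ℝ := (x' * y' - S') / x' with hu'
  have hup : 0 < u := div_pos h hx
  have hu'p : 0 < u' := div_pos h' hx'
  set us : ℝ := s * u + (1 - s) * u' with hus
  have husp : 0 < us := by
    rcases eq_or_lt_of_le hs0 with hs | hs
    · simp [hus, ← hs]; linarith
    · positivity
  -- termwise quadratic-over-linear inequality, summed
  have hsum : ∑ i, (s * z i + (1 - s) * z' i) ^ 2
      ≤ xs * (s * (S / x) + (1 - s) * (S' / x')) := by
    have : xs * (s * (S / x) + (1 - s) * (S' / x'))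
        = ∑ i, xs * (s * ((z i) ^ 2 / x) + (1 - s) * ((z' i) ^ 2 / x')) := by
      rw [hS, hS', Finset.sum_div, Finset.sum_div, Finset.mul_sum, Finset.mul_sum,
        ← Finset.sum_add_distrib, Finset.mul_sum]
    rw [this]
    apply Finset.sum_le_sum
    intro i _
    have key : (s * z i + (1 - s) * z' i) ^ 2 * (x * x')
        ≤ xs * (s * ((z i) ^ 2 / x) + (1 - s) * ((z' i) ^ 2 / x')) * (x * x') := by
      have h1 : xs * (s * ((z i) ^ 2 / x) + (1 - s) * ((z' i) ^ 2 / x')) * (x * x')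
          = xs * (s * (z i) ^ 2 * x' + (1 - s) * (z' i) ^ 2 * x) := by
        field_simp
      rw [h1, hxs]
      nlinarith [mul_nonneg (mul_nonneg hs0 hs1') (sq_nonneg (x * z' i - x' * z i))]
    have hxx' : 0 < x * x' := mul_pos hx hx'
    exact le_of_mul_le_mul_right key hxx'
  -- main chain
  have hlower : xs * us ≤ xs * (s * y + (1 - s) * y') - ∑ i, (s * z i + (1 - s) * z' i) ^ 2 := by
    have hyu : s * y + (1 - s) * y' = us + (s * (S / x) + (1 - s) * (S' / x')) := by
      rw [hus, hu, hu']
      field_simp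
      ring
    rw [hyu, mul_add]
    linarith
  have h2 : Real.log (xs * us) ≤ Real.log (xs * (s * y + (1 - s) * y')
      - ∑ i, (s * z i + (1 - s) * z' i) ^ 2) :=
    Real.log_le_log (by positivity) hlower
  have h3 : Real.log (xs * us) = Real.log xs + Real.log us :=
    Real.log_mul (ne_of_gt hxsp) (ne_of_gt husp)
  have h4 := log_concave_combo x x' s hx hx' hs0 hs1
  have h5 := log_concave_combo u u' s hup hu'p hs0 hs1
  have hxu : Real.log x + Real.log u = Real.log (x * y - S) := by
    rw [← Real.log_mul (ne_of_gt hx) (ne_of_gt hup), hu,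
      mul_div_cancel₀ _ (ne_of_gt hx)]
  have hx'u' : Real.log x' + Real.log u' = Real.log (x' * y' - S') := by
    rw [← Real.log_mul (ne_of_gt hx') (ne_of_gt hu'p), hu',
      mul_div_cancel₀ _ (ne_of_gt hx')]
  calc s * Real.log (x * y - S) + (1 - s) * Real.log (x' * y' - S')
      = s * (Real.log x + Real.log u) + (1 - s) * (Real.log x' + Real.log u') := by
        rw [hxu, hx'u']
    _ = (s * Real.log x + (1 - s) * Real.log x') + (s * Real.log u + (1 - s) * Real.log u') := by
        ring
    _ ≤ Real.log xs + Real.log us := add_le_add h4 h5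
    _ = Real.log (xs * us) := h3.symm
    _ ≤ _ := h2
end

section
/- For real numbers x, y, z_1, ..., z_n, x̃, ỹ, z̃_1, ..., z̃_n with x, x̃ > 0, xy - Σ z_i² = a > 0 and x̃ỹ - Σ z̃_i² = λ²a with λ > 0, the midpoint satisfies ((x+x̃)/2)((y+ỹ)/2) - Σ ((z_i+z̃_i)/2)² ≥ λa. -/
/-- the midpoint inequality for the quadratic `x*y - ∑ zᵢ²`. -/
theorem midpoint_quadratic_ineq (n : ℕ) (x y x' y' a lam : ℝ) (z z' : Fin n → ℝ)
    (ha : 0 < a) (hlam : 0 < lam) (hx : 0 < x) (hx' : 0 < x')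
    (h : x * y - ∑ i, (z i) ^ 2 = a)
    (h' : x' * y' - ∑ i, (z' i) ^ 2 = lam ^ 2 * a) :
    ((x + x') / 2) * ((y + y') / 2) - ∑ i, ((z i + z' i) / 2) ^ 2 ≥ lam * a := by
  set S := ∑ i, (z i) ^ 2 with hS
  set S' := ∑ i, (z' i) ^ 2 with hS'
  set C := ∑ i, z i * z' i with hC
  have hsum : ∑ i, ((z i + z' i) / 2) ^ 2 = (S + 2 * C + S') / 4 := by
    rw [hS, hS', hC, Finset.mul_sum, ← Finset.sum_add_distrib, ← Finset.sum_add_distrib,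
      Finset.sum_div]
    exact Finset.sum_congr rfl fun i _ => by ring
  have hkey : x' ^ 2 * S - 2 * x * x' * C + x ^ 2 * S' ≥ 0 := by
    have h0 : ∑ i, (x' * z i - x * z' i) ^ 2 ≥ 0 :=
      Finset.sum_nonneg fun i _ => sq_nonneg _
    calc x' ^ 2 * S - 2 * x * x' * C + x ^ 2 * S'
        = ∑ i, (x' * z i - x * z' i) ^ 2 := by
          rw [hS, hS', hC, Finset.mul_sum, Finset.mul_sum, Finset.mul_sum,
            ← Finset.sum_sub_distrib, ← Finset.sum_add_distrib]
          exact Finset.sum_congr rfl fun i _ => by ring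
      _ ≥ 0 := h0
  have hxy : x * y = a + S := by linarith
  have hxy' : x' * y' = lam ^ 2 * a + S' := by linarith
  have h1 : x' ^ 2 * (x * y) = x' ^ 2 * (a + S) := by rw [hxy]
  have h2 : x ^ 2 * (x' * y') = x ^ 2 * (lam ^ 2 * a + S') := by rw [hxy']
  have h3 : x * x' * (x * y) = x * x' * (a + S) := by rw [hxy]
  have h4 : x * x' * (x' * y') = x * x' * (lam ^ 2 * a + S') := by rw [hxy']
  have hxx' : 0 < x * x' := mul_pos hx hx'
  rw [hsum]
  nlinarith [h1, h2, h3, h4, hkey, hxx',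
    mul_nonneg (mul_nonneg ha.le hxx'.le) (sq_nonneg (1 - lam)),
    mul_nonneg ha.le (sq_nonneg (x' - lam * x))]
end

section
/- Let E be a real symmetric n×n matrix (n = 4) with eigenvalues λ_1 ≥ λ_2 ≥ λ_3 ≥ λ_4 satisfying σ_1(λ) > 0 and σ_2(λ) > 0. Then for every vector φ ∈ ℝ⁴, ⟨T_1(E), -φ⊗φ + (|φ|²/2)·I⟩ ≥ 0, where T_1(E) = σ_1(E)·I - E. -/
open Matrix

lemma trace_eq_sum_eigs {n : Type*} [Fintype n] [DecidableEq n] {A : Matrix n n ℝ}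
    (hA : A.IsHermitian) : A.trace = ∑ i, hA.eigenvalues i := by
  nth_rewrite 1 [hA.spectral_theorem]
  rw [Unitary.conjStarAlgAut_apply, Matrix.trace_mul_cycle, Unitary.coe_star_mul_self, one_mul]
  simp [Matrix.trace_diagonal]

lemma trace_sq_eq_sum_eigs_sq {n : Type*} [Fintype n] [DecidableEq n] {A : Matrix n n ℝ}
    (hA : A.IsHermitian) : (A * A).trace = ∑ i, hA.eigenvalues i ^ 2 := by
  set U : Matrix n n ℝ := (hA.eigenvectorUnitary : Matrix n n ℝ) with hUdef
  set D : Matrix n n ℝ := diagonal (RCLike.ofReal ∘ hA.eigenvalues) with hDdef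
  have hU : star U * U = 1 := Unitary.coe_star_mul_self hA.eigenvectorUnitary
  have h2 : ∀ X : Matrix n n ℝ, X * star U * U = X := fun X => by
    rw [mul_assoc, hU, mul_one]
  conv_lhs => rw [hA.spectral_theorem, Unitary.conjStarAlgAut_apply]
  have key : U * D * star U * (U * D * star U) = U * (D * D) * star U := by
    simp only [← mul_assoc]
    rw [h2]
  rw [key, Matrix.trace_mul_cycle, hU, one_mul]
  have : D * D = diagonal (fun i => hA.eigenvalues i ^ 2) := by
    rw [hDdef, Matrix.diagonal_mul_diagonal]
    funext i; simp [sq]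
  rw [this, Matrix.trace_diagonal]

/-- for a real symmetric 4×4 matrix `E ∈ Γ₂⁺`,
`⟨T₁(E), -φ⊗φ + (|φ|²/2)·I⟩ ≥ 0` for every `φ ∈ ℝ⁴`. -/
theorem quadratic_form_nonneg_dim4 (E : Matrix (Fin 4) (Fin 4) ℝ) (hE : E.IsSymm)
    (h1 : 0 < E.trace)
    (h2 : 0 < ((E.trace) ^ 2 - (E * E).trace) / 2)
    (phi : Fin 4 → ℝ) :
    0 ≤ Matrix.trace ((E.trace • (1 : Matrix (Fin 4) (Fin 4) ℝ) - E) *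
        (-(Matrix.vecMulVec phi phi)
          + ((∑ i, (phi i) ^ 2) / 2) • (1 : Matrix (Fin 4) (Fin 4) ℝ))) := by
  set t := E.trace with ht
  set M : Matrix (Fin 4) (Fin 4) ℝ := E + (t/2) • 1 with hM
  have hMH : M.IsHermitian := by
    rw [Matrix.IsHermitian, Matrix.conjTranspose_eq_transpose_of_trivial, hM,
      Matrix.transpose_add, Matrix.transpose_smul, Matrix.transpose_one]
    rw [hE]
  have htr : M.trace = 3 * t := by
    simp [hM, Matrix.trace_add, Matrix.trace_smul, Matrix.trace_one]; ring
  have htr2 : (M * M).trace = (E * E).trace + 2 * t ^ 2 := by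
    have : M * M = E * E + t • E + (t^2/4) • 1 := by
      rw [hM]; simp [Matrix.add_mul, Matrix.mul_add, Matrix.smul_mul, Matrix.mul_smul,
        smul_smul]
      module
    rw [this]
    simp [Matrix.trace_add, Matrix.trace_smul, Matrix.trace_one, ← ht]
    ring
  have heig : ∀ i, 0 ≤ hMH.eigenvalues i := by
    have hs : ∑ i, hMH.eigenvalues i = 3 * t := by rw [← trace_eq_sum_eigs hMH, htr]
    have hs2 : ∑ i, hMH.eigenvalues i ^ 2 < 3 * t ^ 2 := by
      rw [← trace_sq_eq_sum_eigs_sq hMH, htr2]; nlinarith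
    rw [Fin.sum_univ_four] at hs hs2
    set a := hMH.eigenvalues 0 with ha; set b := hMH.eigenvalues 1 with hb
    set c := hMH.eigenvalues 2 with hc; set d := hMH.eigenvalues 3 with hd
    intro i
    fin_cases i
    · show (0:ℝ) ≤ a
      nlinarith [sq_nonneg (b-c), sq_nonneg (b-d), sq_nonneg (c-d), sq_nonneg a]
    · show (0:ℝ) ≤ b
      nlinarith [sq_nonneg (a-c), sq_nonneg (a-d), sq_nonneg (c-d), sq_nonneg b]
    · show (0:ℝ) ≤ c
      nlinarith [sq_nonneg (a-b), sq_nonneg (a-d), sq_nonneg (b-d), sq_nonneg c]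
    · show (0:ℝ) ≤ d
      nlinarith [sq_nonneg (a-b), sq_nonneg (a-c), sq_nonneg (b-c), sq_nonneg d]
  have hpsd : M.PosSemidef := hMH.posSemidef_iff_eigenvalues_nonneg.mpr heig
  have hq := hpsd.dotProduct_mulVec_nonneg phi
  simp only [RCLike.re_to_real, star_trivial] at hq
  set s := ∑ i, (phi i) ^ 2 with hsdef
  set P := Matrix.vecMulVec phi phi with hP
  have e1 : P.trace = s := by
    simp [hP, hsdef, Matrix.trace, Matrix.diag, Matrix.vecMulVec_apply, sq]
  have e2 : (E * P).trace = phi ⬝ᵥ (E *ᵥ phi) := by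
    simp only [hP, Matrix.trace, Matrix.diag, Matrix.mul_apply, Matrix.vecMulVec_apply,
      dotProduct, Matrix.mulVec, Finset.mul_sum]
    exact Finset.sum_congr rfl fun i _ => Finset.sum_congr rfl fun j _ => by ring
  have expand : (t • (1 : Matrix (Fin 4) (Fin 4) ℝ) - E) * (-P + (s / 2) • 1)
      = -(t • P) + (t * s / 2) • 1 + E * P - (s / 2) • E := by
    simp only [Matrix.sub_mul, Matrix.mul_add, Matrix.mul_neg, Matrix.smul_mul,
      Matrix.mul_smul, Matrix.one_mul, Matrix.mul_one, smul_smul]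
    module
  have e3 : phi ⬝ᵥ (M *ᵥ phi) = phi ⬝ᵥ (E *ᵥ phi) + (t / 2) * s := by
    rw [hM, Matrix.add_mulVec, dotProduct_add, Matrix.smul_mulVec,
      Matrix.one_mulVec, dotProduct_smul]
    congr 1
    simp [dotProduct, hsdef, sq, smul_eq_mul, Finset.mul_sum, mul_assoc]
  rw [expand]
  have e4 : Matrix.trace (-(t • P) + (t * s / 2) • 1 + E * P - (s / 2) • E)
      = phi ⬝ᵥ (E *ᵥ phi) + (t / 2) * s := by
    rw [Matrix.trace_sub, Matrix.trace_add, Matrix.trace_add, Matrix.trace_neg,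
      Matrix.trace_smul, Matrix.trace_smul, Matrix.trace_smul, Matrix.trace_one, e1, e2, ← ht]
    simp only [smul_eq_mul, Fintype.card_fin]
    push_cast
    ring
  rw [e4, ← e3]
  exact hq
end

section
/- Let n ≥ 5 and λ_1 ≥ ... ≥ λ_n real numbers with σ_1(λ) > 0 and σ_2(λ) > 0. Then (n-3)/2 · σ_1(λ) + λ_n ≥ (2/5) σ_1(λ). -/
lemma sq_sum_eq_aux {n : ℕ} (f : Fin n → ℝ) :
    (∑ i, f i) ^ 2 = (∑ i, f i ^ 2) + 2 * ∑ i, ∑ j ∈ Finset.Ioi i, f i * f j := by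
  have key : ∀ i : Fin n, ∑ j, f i * f j
      = f i ^ 2 + (∑ j ∈ Finset.Ioi i, f i * f j) + ∑ j ∈ Finset.Iio i, f i * f j := by
    intro i
    have : (Finset.univ : Finset (Fin n)) = insert i (Finset.Ioi i ∪ Finset.Iio i) := by
      ext j
      simp only [Finset.mem_insert, Finset.mem_union, Finset.mem_Ioi, Finset.mem_Iio,
        Finset.mem_univ, true_iff]
      rcases lt_trichotomy j i with h | h | h <;> tauto
    rw [this, Finset.sum_insert, Finset.sum_union]
    · rw [sq]; ring
    · rw [Finset.disjoint_left]; intro a ha hb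
      simp only [Finset.mem_Ioi, Finset.mem_Iio] at ha hb; exact absurd (ha.trans hb) (lt_irrefl i)
    · simp
  have swap : (∑ i, ∑ j ∈ Finset.Iio i, f i * f j)
      = ∑ i, ∑ j ∈ Finset.Ioi i, f i * f j := by
    rw [Finset.sum_comm' (t' := Finset.univ) (s' := fun j => Finset.Ioi j)]
    · exact Finset.sum_congr rfl fun i _ => Finset.sum_congr rfl fun j _ => mul_comm _ _
    · intro x y; simp [Finset.mem_Iio, Finset.mem_Ioi]
  calc (∑ i, f i) ^ 2 = ∑ i, ∑ j, f i * f j := by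
        rw [sq, Finset.sum_mul_sum]
    _ = (∑ i, f i ^ 2) + (∑ i, ∑ j ∈ Finset.Ioi i, f i * f j)
        + ∑ i, ∑ j ∈ Finset.Iio i, f i * f j := by
        simp_rw [key, Finset.sum_add_distrib]
    _ = _ := by rw [swap]; ring

/-- for `n ≥ 5` and decreasingly ordered `λ ∈ Γ₂⁺`,
`(n-3)/2 · σ₁(λ) + λₙ ≥ (2/5) σ₁(λ)`. -/
theorem sigma1_lambda_n_ineq (n : ℕ) (hn : 5 ≤ n) (lam : Fin n → ℝ)
    (hord : ∀ i j : Fin n, i ≤ j → lam j ≤ lam i)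
    (h1 : 0 < ∑ i, lam i)
    (h2 : 0 < ∑ i, ∑ j ∈ Finset.Ioi i, lam i * lam j) :
    ((n : ℝ) - 3) / 2 * (∑ i, lam i) + lam ⟨n - 1, by omega⟩
      ≥ 2 / 5 * (∑ i, lam i) := by
  set N : Fin n := ⟨n - 1, by omega⟩
  set S : ℝ := ∑ i, lam i with hS
  set a : ℝ := lam N with ha
  -- sum of squares is less than S^2
  have hQ : (∑ i, lam i ^ 2) < S ^ 2 := by
    have := sq_sum_eq_aux lam
    rw [← hS] at this; nlinarith
  -- split off the last coordinate
  have hsplit : (∑ i, lam i ^ 2) = (∑ i ∈ Finset.univ.erase N, lam i ^ 2) + a ^ 2 := by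
    rw [Finset.sum_erase_add _ _ (Finset.mem_univ N)]
  have hsplit1 : (∑ i ∈ Finset.univ.erase N, lam i) = S - a := by
    have := Finset.sum_erase_add Finset.univ lam (Finset.mem_univ N)
    rw [← hS] at this; linarith
  -- Cauchy-Schwarz on the first n-1 entries
  have hcard : (Finset.univ.erase N).card = n - 1 := by
    rw [Finset.card_erase_of_mem (Finset.mem_univ N), Finset.card_univ, Fintype.card_fin]
  have hCS : (S - a) ^ 2 ≤ ((n : ℝ) - 1) * ∑ i ∈ Finset.univ.erase N, lam i ^ 2 := by
    have := sq_sum_le_card_mul_sum_sq (s := Finset.univ.erase N) (f := lam)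
    rw [hsplit1, hcard] at this
    have hn1 : ((n - 1 : ℕ) : ℝ) = (n : ℝ) - 1 := by
      rw [Nat.cast_sub (by omega)]; norm_num
    rw [hn1] at this; exact this
  -- a is the minimum, so n * a ≤ S
  have hmin : (n : ℝ) * a ≤ S := by
    have : ∀ i : Fin n, a ≤ lam i := fun i => hord i N (by
      have : (i : ℕ) ≤ n - 1 := by omega
      exact this)
    calc (n : ℝ) * a = ∑ _i : Fin n, a := by
          rw [Finset.sum_const, Finset.card_univ, Fintype.card_fin, nsmul_eq_mul]
      _ ≤ S := Finset.sum_le_sum fun i _ => this i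
  have hn5 : (5 : ℝ) ≤ (n : ℝ) := by exact_mod_cast hn
  have haS : a < S := by nlinarith
  -- key bound: (S - a)^2 < (n-1)(S-a)(S+a)
  have hkey : (S - a) ^ 2 < ((n : ℝ) - 1) * (S ^ 2 - a ^ 2) := by nlinarith
  -- so S - a < (n-1)(S+a), giving n a > -(n-2) S
  have hfin : -((n : ℝ) - 2) * S < (n : ℝ) * a := by nlinarith [sq_nonneg (S - a)]
  -- conclude
  rw [ge_iff_le]
  have hnpos : (0 : ℝ) < n := by linarith
  have hprod : 0 ≤ ((n : ℝ) - 5) * (5 * (n : ℝ) - 4) * S :=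
    mul_nonneg (mul_nonneg (by linarith) (by linarith)) h1.le
  nlinarith [hprod, mul_pos hnpos h1]
end

section
/- Let r, r̃ be n×n real symmetric matrices, both in Γ₂⁺ (i.e. σ_1 > 0 and σ_2 > 0), and set Q = σ_1(r)σ_1(r̃) - ⟨r, r̃⟩. Then Q ≥ 2√(σ_2(r)σ_2(r̃)), and consequently 4σ_2((r+r̃)/2) ≥ (√σ_2(r) + √σ_2(r̃))², i.e. √σ_2 is concave on Γ₂⁺. -/
open Matrix

private lemma trace_mul_symm_sum {n : ℕ} (A B : Matrix (Fin n) (Fin n) ℝ)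
    (hB : B.IsSymm) :
    (A * B).trace = ∑ p : Fin n × Fin n, A p.1 p.2 * B p.1 p.2 := by
  rw [Matrix.trace, Fintype.sum_prod_type]
  refine Finset.sum_congr rfl fun i _ => ?_
  simp only [Matrix.diag_apply, Matrix.mul_apply]
  refine Finset.sum_congr rfl fun j _ => ?_
  congr 1
  exact hB.apply i j

private lemma cs_trace {n : ℕ} (A B : Matrix (Fin n) (Fin n) ℝ)
    (hA : A.IsSymm) (hB : B.IsSymm) :
    ((A * B).trace) ^ 2 ≤ (A * A).trace * (B * B).trace := by
  rw [trace_mul_symm_sum A B hB, trace_mul_symm_sum A A hA, trace_mul_symm_sum B B hB]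
  simpa [sq] using Finset.sum_mul_sq_le_sq_mul_sq Finset.univ
    (fun p : Fin n × Fin n => A p.1 p.2) (fun p => B p.1 p.2)

private lemma trace_sq_nonneg {n : ℕ} (A : Matrix (Fin n) (Fin n) ℝ)
    (hA : A.IsSymm) : 0 ≤ (A * A).trace := by
  rw [trace_mul_symm_sum A A hA]
  exact Finset.sum_nonneg fun p _ => mul_self_nonneg _

/-- Pure real-number core of the argument. -/
private lemma aux_real (m s s' T T' U A A' u x y : ℝ)
    (hm : 1 ≤ m) (hs : 0 < s) (hs' : 0 < s')
    (hx : 0 < x) (hy : 0 < y)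
    (hA : A = T - s * s / m) (hA' : A' = T' - s' * s' / m) (hu : u = U - s * s' / m)
    (hAnn : 0 ≤ A) (hA'nn : 0 ≤ A') (hcs : u ^ 2 ≤ A * A')
    (hx2 : x ^ 2 = (s ^ 2 - T) / 2) (hy2 : y ^ 2 = (s' ^ 2 - T') / 2) :
    2 * (x * y) ≤ s * s' - U := by
  have hm0 : (0:ℝ) < m := lt_of_lt_of_le one_pos hm
  set c : ℝ := 1 - 1 / m with hc
  have hcnn : 0 ≤ c := by
    have : 1 / m ≤ 1 := by rw [div_le_one hm0]; exact hm
    simp only [hc]; linarith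
  set b := Real.sqrt A with hb
  set b' := Real.sqrt A' with hb'
  have hb2 : b ^ 2 = A := Real.sq_sqrt hAnn
  have hb'2 : b' ^ 2 = A' := Real.sq_sqrt hA'nn
  have hbnn : 0 ≤ b := Real.sqrt_nonneg _
  have hb'nn : 0 ≤ b' := Real.sqrt_nonneg _
  have hub : u ≤ b * b' := by
    calc u ≤ |u| := le_abs_self u
    _ = Real.sqrt (u ^ 2) := (Real.sqrt_sq_eq_abs u).symm
    _ ≤ Real.sqrt (A * A') := Real.sqrt_le_sqrt hcs
    _ = b * b' := by rw [Real.sqrt_mul hAnn]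
  set a := Real.sqrt c * s with ha
  set a' := Real.sqrt c * s' with ha'
  have hann : 0 ≤ a := mul_nonneg (Real.sqrt_nonneg _) hs.le
  have ha'nn : 0 ≤ a' := mul_nonneg (Real.sqrt_nonneg _) hs'.le
  have hsqc : Real.sqrt c ^ 2 = c := Real.sq_sqrt hcnn
  have ha2 : a ^ 2 = b ^ 2 + 2 * x ^ 2 := by
    rw [ha, mul_pow, hsqc, hb2, hA, hx2, hc]
    field_simp
    ring
  have ha'2 : a' ^ 2 = b' ^ 2 + 2 * y ^ 2 := by
    rw [ha', mul_pow, hsqc, hb'2, hA', hy2, hc]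
    field_simp
    ring
  have hkey : b * b' + 2 * (x * y) ≤ a * a' := by
    have e : (a * a') ^ 2 = (b ^ 2 + 2 * x ^ 2) * (b' ^ 2 + 2 * y ^ 2) := by
      rw [← ha2, ← ha'2]; ring
    have hsq : (b * b' + 2 * (x * y)) ^ 2 ≤ (a * a') ^ 2 := by
      rw [e]; nlinarith [sq_nonneg (x * b' - y * b)]
    have hp : 0 ≤ b * b' + 2 * (x * y) := by positivity
    have hq : 0 ≤ a * a' := mul_nonneg hann ha'nn
    have := Real.sqrt_le_sqrt hsq
    rwa [Real.sqrt_sq hp, Real.sqrt_sq hq] at this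
  have haa' : a * a' = c * (s * s') := by
    rw [ha, ha']; linear_combination s * s' * hsqc
  have : c * (s * s') - u = s * s' - U := by
    rw [hu, hc]; field_simp; ring
  linarith [hkey, hub]

/-- `Q ≥ 2√(σ₂(r)σ₂(r̃))`, and the concavity of `√σ₂` on `Γ₂⁺`. -/
theorem sqrt_sigma2_concave (n : ℕ) (r r' : Matrix (Fin n) (Fin n) ℝ)
    (hr : r.IsSymm) (hr' : r'.IsSymm)
    (h1 : 0 < r.trace) (h2 : 0 < (r.trace ^ 2 - (r * r).trace) / 2)
    (h1' : 0 < r'.trace) (h2' : 0 < (r'.trace ^ 2 - (r' * r').trace) / 2) :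
    r.trace * r'.trace - (r * r').trace
      ≥ 2 * Real.sqrt (((r.trace ^ 2 - (r * r).trace) / 2)
          * ((r'.trace ^ 2 - (r' * r').trace) / 2))
    ∧ 4 * ((((1 : ℝ) / 2) • (r + r')).trace ^ 2
          - ((((1 : ℝ) / 2) • (r + r')) * (((1 : ℝ) / 2) • (r + r'))).trace) / 2
      ≥ (Real.sqrt ((r.trace ^ 2 - (r * r).trace) / 2)
          + Real.sqrt ((r'.trace ^ 2 - (r' * r').trace) / 2)) ^ 2 := by
  rcases Nat.eq_zero_or_pos n with hn | hn
  · exfalso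
    subst hn
    simp [Matrix.trace] at h1
  have hnR : (1 : ℝ) ≤ (n : ℝ) := by exact_mod_cast hn
  have hn0 : (n : ℝ) ≠ 0 := by positivity
  have E : Matrix (Fin n) (Fin n) ℝ := r - (r.trace / n) • 1
  set σ1 : ℝ := r.trace with hσ1
  set σ1' : ℝ := r'.trace with hσ1'
  have hEs : (r - (σ1 / n) • 1).IsSymm := hr.sub ((Matrix.isSymm_one).smul _)
  have hE's : (r' - (σ1' / n) • 1).IsSymm := hr'.sub ((Matrix.isSymm_one).smul _)
  have htr1 : (1 : Matrix (Fin n) (Fin n) ℝ).trace = (n : ℝ) := by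
    simp [Matrix.trace_one]
  have expand : ∀ (M M' : Matrix (Fin n) (Fin n) ℝ) (t t' : ℝ),
      ((M - (t / n) • 1) * (M' - (t' / n) • 1)).trace
        = (M * M').trace - (t / n) * M'.trace - (t' / n) * M.trace + t * t' / n := by
    intro M M' t t'
    simp only [Matrix.sub_mul, Matrix.mul_sub, Matrix.smul_mul, Matrix.mul_smul,
      Matrix.trace_sub, Matrix.trace_smul, Matrix.one_mul, Matrix.mul_one, smul_smul,
      smul_eq_mul, htr1]
    field_simp
    ring
  have hEE : ((r - (σ1 / n) • 1) * (r - (σ1 / n) • 1)).trace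
      = (r * r).trace - σ1 * σ1 / n := by
    rw [expand r r σ1 σ1, ← hσ1]; field_simp; ring
  have hE'E' : ((r' - (σ1' / n) • 1) * (r' - (σ1' / n) • 1)).trace
      = (r' * r').trace - σ1' * σ1' / n := by
    rw [expand r' r' σ1' σ1', ← hσ1']; field_simp; ring
  have hEE' : ((r - (σ1 / n) • 1) * (r' - (σ1' / n) • 1)).trace
      = (r * r').trace - σ1 * σ1' / n := by
    rw [expand r r' σ1 σ1', ← hσ1, ← hσ1']; field_simp; ring
  have hAnn : 0 ≤ (r * r).trace - σ1 * σ1 / n := by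
    rw [← hEE]; exact trace_sq_nonneg _ hEs
  have hA'nn : 0 ≤ (r' * r').trace - σ1' * σ1' / n := by
    rw [← hE'E']; exact trace_sq_nonneg _ hE's
  have hcs : ((r * r').trace - σ1 * σ1' / n) ^ 2
      ≤ ((r * r).trace - σ1 * σ1 / n) * ((r' * r').trace - σ1' * σ1' / n) := by
    rw [← hEE, ← hE'E', ← hEE']
    exact cs_trace _ _ hEs hE's
  set x := Real.sqrt ((σ1 ^ 2 - (r * r).trace) / 2) with hx
  set y := Real.sqrt ((σ1' ^ 2 - (r' * r').trace) / 2) with hy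
  have hx2 : x ^ 2 = (σ1 ^ 2 - (r * r).trace) / 2 := Real.sq_sqrt h2.le
  have hy2 : y ^ 2 = (σ1' ^ 2 - (r' * r').trace) / 2 := Real.sq_sqrt h2'.le
  have hxpos : 0 < x := Real.sqrt_pos.2 h2
  have hypos : 0 < y := Real.sqrt_pos.2 h2'
  have hQge : 2 * (x * y) ≤ σ1 * σ1' - (r * r').trace :=
    aux_real (n : ℝ) σ1 σ1' (r * r).trace (r' * r').trace (r * r').trace
      ((r * r).trace - σ1 * σ1 / n) ((r' * r').trace - σ1' * σ1' / n)
      ((r * r').trace - σ1 * σ1' / n) x y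
      hnR h1 h1' hxpos hypos rfl rfl rfl hAnn hA'nn hcs hx2 hy2
  have hxy : Real.sqrt (((σ1 ^ 2 - (r * r).trace) / 2) * ((σ1' ^ 2 - (r' * r').trace) / 2))
      = x * y := by
    rw [hx, hy, ← Real.sqrt_mul h2.le]
  refine ⟨by rw [hxy]; linarith [hQge], ?_⟩
  have htr : (((1 : ℝ) / 2) • (r + r')).trace = (σ1 + σ1') / 2 := by
    rw [Matrix.trace_smul, Matrix.trace_add]
    simp only [smul_eq_mul, ← hσ1, ← hσ1']
    ring
  have htr2 : ((((1 : ℝ) / 2) • (r + r')) * (((1 : ℝ) / 2) • (r + r'))).trace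
      = ((r * r).trace + 2 * (r * r').trace + (r' * r').trace) / 4 := by
    simp only [Matrix.smul_mul, Matrix.mul_smul, Matrix.add_mul, Matrix.mul_add,
      Matrix.trace_smul, Matrix.trace_add, smul_smul, smul_eq_mul,
      Matrix.trace_mul_comm r' r]
    ring
  rw [htr, htr2]
  have hsum : (x + y) ^ 2 = x ^ 2 + 2 * (x * y) + y ^ 2 := by ring
  rw [ge_iff_le, hsum, hx2, hy2]
  have expand2 : 4 * (((σ1 + σ1') / 2) ^ 2
      - ((r * r).trace + 2 * (r * r').trace + (r' * r').trace) / 4) / 2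
      = (σ1 ^ 2 - (r * r).trace) / 2 + (σ1' ^ 2 - (r' * r').trace) / 2
        + (σ1 * σ1' - (r * r').trace) := by ring
  rw [expand2]
  linarith [hQge]
end

section
/- Let r, r̃ be n×n real symmetric matrices with σ_1(r), σ_1(r̃) > 0, and V a unit vector such that T_1(r)(V,V) > 0 and T_1(r̃)(V,V) > 0. Then σ_1(r)σ_1(r̃) - ⟨r,r̃⟩ ≥ σ_2(r)·(T_1(r̃)(V,V)/T_1(r)(V,V)) + σ_2(r̃)·(T_1(r)(V,V)/T_1(r̃)(V,V)). -/
open Matrix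

private lemma key_cs (n : ℕ) (s : Matrix (Fin n) (Fin n) ℝ) (hs : s.IsSymm)
    (V : Fin n → ℝ) (hV : ∑ i, (V i) ^ 2 = 1) :
    (V ⬝ᵥ s *ᵥ V) ^ 2 ≤ (s * s).trace := by
  have h1 : V ⬝ᵥ s *ᵥ V = ∑ p : Fin n × Fin n, s p.1 p.2 * (V p.1 * V p.2) := by
    rw [Fintype.sum_prod_type]
    simp only [dotProduct, mulVec, Finset.mul_sum]
    apply Finset.sum_congr rfl; intro i _
    apply Finset.sum_congr rfl; intro j _
    ring
  have h2 : (s * s).trace = ∑ p : Fin n × Fin n, (s p.1 p.2) ^ 2 := by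
    rw [Fintype.sum_prod_type]
    simp only [Matrix.trace, Matrix.mul_apply, Matrix.diag]
    apply Finset.sum_congr rfl; intro i _
    apply Finset.sum_congr rfl; intro j _
    have : s j i = s i j := by
      conv_lhs => rw [← hs]
      rfl
    rw [this]; ring
  have h3 : ∑ p : Fin n × Fin n, (V p.1 * V p.2) ^ 2 = 1 := by
    rw [Fintype.sum_prod_type]
    simp only [mul_pow, ← Finset.mul_sum, hV, mul_one]
  calc (V ⬝ᵥ s *ᵥ V) ^ 2
      = (∑ p : Fin n × Fin n, s p.1 p.2 * (V p.1 * V p.2)) ^ 2 := by rw [h1]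
    _ ≤ (∑ p : Fin n × Fin n, (s p.1 p.2) ^ 2)
          * ∑ p : Fin n × Fin n, (V p.1 * V p.2) ^ 2 :=
        Finset.sum_mul_sq_le_sq_mul_sq _ _ _
    _ = (s * s).trace := by rw [h3, mul_one, h2]

/-- `σ₁(r)σ₁(r̃) - ⟨r,r̃⟩ ≥ σ₂(r)·(T̃₁₁/T₁₁) + σ₂(r̃)·(T₁₁/T̃₁₁)`. -/
theorem Q_ge_sigma2_ratio (n : ℕ) (r r' : Matrix (Fin n) (Fin n) ℝ)
    (hr : r.IsSymm) (hr' : r'.IsSymm)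
    (h1 : 0 < r.trace) (h1' : 0 < r'.trace)
    (V : Fin n → ℝ) (hV : ∑ i, (V i) ^ 2 = 1)
    (hT : 0 < V ⬝ᵥ (r.trace • (1 : Matrix (Fin n) (Fin n) ℝ) - r) *ᵥ V)
    (hT' : 0 < V ⬝ᵥ (r'.trace • (1 : Matrix (Fin n) (Fin n) ℝ) - r') *ᵥ V) :
    r.trace * r'.trace - (r * r').trace
      ≥ ((r.trace ^ 2 - (r * r).trace) / 2)
          * ((V ⬝ᵥ (r'.trace • (1 : Matrix (Fin n) (Fin n) ℝ) - r') *ᵥ V)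
            / (V ⬝ᵥ (r.trace • (1 : Matrix (Fin n) (Fin n) ℝ) - r) *ᵥ V))
        + ((r'.trace ^ 2 - (r' * r').trace) / 2)
          * ((V ⬝ᵥ (r.trace • (1 : Matrix (Fin n) (Fin n) ℝ) - r) *ᵥ V)
            / (V ⬝ᵥ (r'.trace • (1 : Matrix (Fin n) (Fin n) ℝ) - r') *ᵥ V)) := by
  set a := V ⬝ᵥ (r.trace • (1 : Matrix (Fin n) (Fin n) ℝ) - r) *ᵥ V with ha
  set b := V ⬝ᵥ (r'.trace • (1 : Matrix (Fin n) (Fin n) ℝ) - r') *ᵥ V with hb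
  have hVV : V ⬝ᵥ V = 1 := by
    simpa [dotProduct, sq] using hV
  have haval : a = r.trace - V ⬝ᵥ r *ᵥ V := by
    rw [ha, Matrix.sub_mulVec, dotProduct_sub, smul_mulVec, Matrix.one_mulVec,
      dotProduct_smul, smul_eq_mul, hVV, mul_one]
  have hbval : b = r'.trace - V ⬝ᵥ r' *ᵥ V := by
    rw [hb, Matrix.sub_mulVec, dotProduct_sub, smul_mulVec, Matrix.one_mulVec,
      dotProduct_smul, smul_eq_mul, hVV, mul_one]
  -- the matrix s = b • r - a • r'
  set s : Matrix (Fin n) (Fin n) ℝ := b • r - a • r' with hsdef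
  have hssymm : s.IsSymm := by
    unfold Matrix.IsSymm
    rw [hsdef, Matrix.transpose_sub, Matrix.transpose_smul, Matrix.transpose_smul, hr, hr']
  have hsV : V ⬝ᵥ s *ᵥ V = b * (V ⬝ᵥ r *ᵥ V) - a * (V ⬝ᵥ r' *ᵥ V) := by
    rw [hsdef, Matrix.sub_mulVec, dotProduct_sub, smul_mulVec, smul_mulVec,
      dotProduct_smul, dotProduct_smul, smul_eq_mul, smul_eq_mul]
  have hstr : (V ⬝ᵥ s *ᵥ V) ^ 2
      = b ^ 2 * r.trace ^ 2 - 2 * (a * b) * (r.trace * r'.trace) + a ^ 2 * r'.trace ^ 2 := by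
    rw [hsV]
    have e1 : V ⬝ᵥ r *ᵥ V = r.trace - a := by rw [haval]; ring
    have e2 : V ⬝ᵥ r' *ᵥ V = r'.trace - b := by rw [hbval]; ring
    rw [e1, e2]; ring
  have hmulcomm : (r * r').trace = (r' * r).trace := Matrix.trace_mul_comm r r'
  have hss : (s * s).trace
      = b ^ 2 * (r * r).trace - 2 * (a * b) * (r * r').trace + a ^ 2 * (r' * r').trace := by
    rw [hsdef]
    simp only [Matrix.sub_mul, Matrix.mul_sub, Matrix.smul_mul, Matrix.mul_smul,
      Matrix.trace_sub, Matrix.trace_smul, smul_smul, smul_eq_mul, hmulcomm]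
    ring
  have hkey := key_cs n s hssymm V hV
  rw [hstr, hss] at hkey
  -- now pure algebra
  have h2ab : 0 < a * b := mul_pos hT hT'
  rw [ge_iff_le]
  have heq : (r.trace ^ 2 - (r * r).trace) / 2 * (b / a)
        + (r'.trace ^ 2 - (r' * r').trace) / 2 * (a / b)
      = (b ^ 2 * (r.trace ^ 2 - (r * r).trace) + a ^ 2 * (r'.trace ^ 2 - (r' * r').trace))
        / (2 * (a * b)) := by
    field_simp
  rw [heq, div_le_iff₀ (by positivity)]
  nlinarith [hkey]
end

section
/- Let σ_2, σ̃_2 > 0 and T, T̃ > 0 be reals, and 4σ̄_2 := σ_2 + σ̃_2 + Q with Q ≥ σ_2·(T̃/T) + σ̃_2·(T/T̃). Then ((σ̃_2 + Q)/σ_2 · T - T̃)·((σ_2 + Q)/σ̃_2 · T̃ - T) ≥ (T + T̃)², and consequently (4σ̄_2/σ_2)T - T - T̃ > 0 and (4σ̄_2/σ̃_2)T̃ - T - T̃ > 0. -/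
/-- the scalar core inequality used in the convexity of `H`. -/
theorem scalar_core_ineq (s2 s2' T T' Q : ℝ)
    (hs2 : 0 < s2) (hs2' : 0 < s2') (hT : 0 < T) (hT' : 0 < T')
    (hQ : Q ≥ s2 * (T' / T) + s2' * (T / T')) :
    ((s2' + Q) / s2 * T - T') * ((s2 + Q) / s2' * T' - T) ≥ (T + T') ^ 2
    ∧ 0 < (s2 + s2' + Q) / s2 * T - T - T'
    ∧ 0 < (s2 + s2' + Q) / s2' * T' - T - T' := by
  have hkey : Q * (T * T') ≥ s2 * T' ^ 2 + s2' * T ^ 2 := by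
    have := mul_le_mul_of_nonneg_right hQ (le_of_lt (mul_pos hT hT'))
    calc s2 * T' ^ 2 + s2' * T ^ 2
        = (s2 * (T' / T) + s2' * (T / T')) * (T * T') := by
          field_simp
      _ ≤ Q * (T * T') := this
  have hA : (s2' + Q) / s2 * T - T' ≥ s2' * T / (s2 * T') * (T + T') := by
    rw [ge_iff_le, ← sub_nonneg]
    have e : ((s2' + Q) / s2 * T - T') - s2' * T / (s2 * T') * (T + T')
        = (Q * (T * T') - (s2 * T' ^ 2 + s2' * T ^ 2)) / (s2 * T') := by
      field_simp; ring
    rw [e]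
    exact div_nonneg (by linarith) (by positivity)
  have hB : (s2 + Q) / s2' * T' - T ≥ s2 * T' / (s2' * T) * (T + T') := by
    rw [ge_iff_le, ← sub_nonneg]
    have e : ((s2 + Q) / s2' * T' - T) - s2 * T' / (s2' * T) * (T + T')
        = (Q * (T * T') - (s2 * T' ^ 2 + s2' * T ^ 2)) / (s2' * T) := by
      field_simp; ring
    rw [e]
    exact div_nonneg (by linarith) (by positivity)
  have hApos : 0 < s2' * T / (s2 * T') * (T + T') := by positivity
  have hBpos : 0 < s2 * T' / (s2' * T) * (T + T') := by positivity
  refine ⟨?_, ?_, ?_⟩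
  · calc (T + T') ^ 2
        = (s2' * T / (s2 * T') * (T + T')) * (s2 * T' / (s2' * T) * (T + T')) := by
          field_simp
      _ ≤ ((s2' + Q) / s2 * T - T') * ((s2 + Q) / s2' * T' - T) :=
          mul_le_mul hA hB (le_of_lt hBpos) (le_trans (le_of_lt hApos) hA)
  · have : (s2 + s2' + Q) / s2 * T - T - T' = ((s2' + Q) / s2 * T - T') := by
      field_simp; ring
    rw [this]; exact lt_of_lt_of_le hApos hA
  · have : (s2 + s2' + Q) / s2' * T' - T - T' = ((s2 + Q) / s2' * T' - T) := by
      field_simp; ring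
    rw [this]; exact lt_of_lt_of_le hBpos hB
end
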